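/- Maximal permissiveness of synthesis (Theorem max): if k' ≼ k and k' ⊨ f, then k' ≼ S^n_{k,f} for every n. That is, every simulant of the plant satisfying the requirement is simulated by the synthesis result. -/

import Mathlib

/-- A Kripke structure with labeled transitions (Kripke-LTS). -/
structure KLTS (P E : Type) where
  X : Type
  L : X → Set P
  T : X → E → X → Prop
  init : X

/-- State-based (Boolean) formulas. -/
inductive BF (P : Type) where
  | tt : BF P
  | ff : BF P
  | atom : P → BF P
  | neg : BF P → BF P
  | and : BF P → BF P → BF P
  | or : BF P → BF P → BF P

/-- Satisfaction of a state-based formula by a label set. -/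
def BSat {P : Type} (A : Set P) : BF P → Prop
  | .tt => True
  | .ff => False
  | .atom p => p ∈ A
  | .neg b => ¬ BSat A b
  | .and b c => BSat A b ∧ BSat A c
  | .or b c => BSat A b ∨ BSat A c

/-- The modal requirement logic F. -/
inductive F (P E : Type) where
  | base : BF P → F P E
  | and : F P E → F P E → F P E
  | or : BF P → F P E → F P E
  | box : E → F P E → F P E
  | dia : E → F P E → F P E
  | inv : F P E → F P E
  | reach : BF P → F P E
  | dlf : F P E

variable {P E : Type}

/-- Reachability (reflexive-transitive closure, ignoring event labels). -/
def KLTS.Star (k : KLTS P E) : k.X → k.X → Prop :=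
  Relation.ReflTransGen (fun a b => ∃ e, k.T a e b)

/-- Validity of a modal formula at a Kripke-LTS. -/
def FSat : KLTS P E → F P E → Prop
  | k, .base b => BSat (k.L k.init) b
  | k, .and f g => FSat k f ∧ FSat k g
  | k, .or b f => BSat (k.L k.init) b ∨ FSat k f
  | k, .box e f => ∀ x', k.T k.init e x' → FSat ⟨k.X, k.L, k.T, x'⟩ f
  | k, .dia e f => ∃ x', k.T k.init e x' ∧ FSat ⟨k.X, k.L, k.T, x'⟩ f
  | k, .inv f => ∀ x', k.Star k.init x' → FSat ⟨k.X, k.L, k.T, x'⟩ f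
  | k, .reach b => ∃ x', k.Star k.init x' ∧ BSat (k.L x') b
  | k, .dlf => ∃ e x', k.T k.init e x'

/-- R is a simulation relation between k' and k. -/
def SimRel (k' k : KLTS P E) (R : k'.X → k.X → Prop) : Prop :=
  ∀ y' y, R y' y → k'.L y' = k.L y ∧
    ∀ e z', k'.T y' e z' → ∃ z, k.T y e z ∧ R z' z

/-- Simulation preorder. -/
def Sim (k' k : KLTS P E) : Prop :=
  ∃ R : k'.X → k.X → Prop, R k'.init k.init ∧ SimRel k' k R

/-- R is a partial bisimulation relation (w.r.t. uncontrollable events U). -/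
def PBisRel (U : Set E) (k' k : KLTS P E) (R : k'.X → k.X → Prop) : Prop :=
  ∀ y' y, R y' y → k'.L y' = k.L y ∧
    (∀ e z', k'.T y' e z' → ∃ z, k.T y e z ∧ R z' z) ∧
    (∀ e z, e ∈ U → k.T y e z → ∃ z', k'.T y' e z' ∧ R z' z)

/-- Partial bisimulation preorder. -/
def PBis (U : Set E) (k' k : KLTS P E) : Prop :=
  ∃ R : k'.X → k.X → Prop, R k'.init k.init ∧ PBisRel U k' k R

/-- The sub-formula relation. -/
inductive SubF : F P E → F P E → Prop where
  | refl (f : F P E) : SubF f f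
  | andL {f g h : F P E} : SubF f g → SubF f (.and g h)
  | andR {f g h : F P E} : SubF f h → SubF f (.and g h)
  | inv {f g : F P E} : SubF f g → SubF f (.inv g)

/-- The state-relative part relation. -/
inductive PartF {X : Type} (L : X → Set P) (x : X) : F P E → F P E → Prop where
  | refl (f : F P E) : PartF L x f f
  | andL {f g h : F P E} : PartF L x f g → PartF L x f (.and g h)
  | andR {f g h : F P E} : PartF L x f h → PartF L x f (.and g h)
  | or {b : BF P} {f g : F P E} : ¬ BSat (L x) b → PartF L x f g → PartF L x f (.or b g)
  | inv {f g : F P E} : PartF L x f g → PartF L x f (.inv g)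

/-- The starting point of synthesis: transition relation over state-formula pairs. -/
inductive Step0 (k : KLTS P E) : k.X × F P E → E → k.X × F P E → Prop where
  | base {x x' : k.X} {e : E} {b : BF P} :
      k.T x e x' → Step0 k (x, .base b) e (x', .base .tt)
  | and_sub {x x' : k.X} {e : E} {f g f' g' : F P E} :
      Step0 k (x, f) e (x', f') → Step0 k (x, g) e (x', g') → SubF g' f' →
      Step0 k (x, .and f g) e (x', f')
  | and_nsub {x x' : k.X} {e : E} {f g f' g' : F P E} :
      Step0 k (x, f) e (x', f') → Step0 k (x, g) e (x', g') → ¬ SubF g' f' →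
      Step0 k (x, .and f g) e (x', .and f' g')
  | or_true {x x' : k.X} {e : E} {b : BF P} {f : F P E} :
      k.T x e x' → BSat (k.L x) b → Step0 k (x, .or b f) e (x', .base .tt)
  | or_step {x x' : k.X} {e : E} {b : BF P} {f f' : F P E} :
      Step0 k (x, f) e (x', f') → Step0 k (x, .or b f) e (x', f')
  | box_same {x x' : k.X} {e : E} {f : F P E} :
      k.T x e x' → Step0 k (x, .box e f) e (x', f)
  | box_other {x x' : k.X} {e e' : E} {f : F P E} :
      k.T x e x' → e ≠ e' → Step0 k (x, .box e' f) e (x', .base .tt)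
  | dia_same {x x' : k.X} {e : E} {f : F P E} :
      k.T x e x' → Step0 k (x, .dia e f) e (x', f)
  | dia_other {x x' : k.X} {e e' : E} {f : F P E} :
      k.T x e x' → Step0 k (x, .dia e' f) e (x', .base .tt)
  | inv_sub {x x' : k.X} {e : E} {f f' : F P E} :
      Step0 k (x, f) e (x', f') → SubF f' (.inv f) →
      Step0 k (x, .inv f) e (x', .inv f)
  | inv_nsub {x x' : k.X} {e : E} {f f' : F P E} :
      Step0 k (x, f) e (x', f') → ¬ SubF f' (.inv f) →
      Step0 k (x, .inv f) e (x', .and (.inv f) f')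
  | reach_true {x x' : k.X} {e : E} {b : BF P} :
      k.T x e x' → Step0 k (x, .reach b) e (x', .base .tt)
  | reach_self {x x' : k.X} {e : E} {b : BF P} :
      k.T x e x' → Step0 k (x, .reach b) e (x', .reach b)
  | dlf {x x' : k.X} {e : E} :
      k.T x e x' → Step0 k (x, .dlf) e (x', .base .tt)

/-- Synthesizability of a formula at a state-formula pair, w.r.t. a relation Tn. -/
inductive Syn (k : KLTS P E) (Tn : k.X × F P E → E → k.X × F P E → Prop) :
    k.X × F P E → F P E → Prop where
  | base {x : k.X} {g : F P E} {b : BF P} :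
      BSat (k.L x) b → Syn k Tn (x, g) (.base b)
  | and {p : k.X × F P E} {f1 f2 : F P E} :
      Syn k Tn p f1 → Syn k Tn p f2 → Syn k Tn p (.and f1 f2)
  | orl {x : k.X} {g : F P E} {b : BF P} {f : F P E} :
      BSat (k.L x) b → Syn k Tn (x, g) (.or b f)
  | orr {p : k.X × F P E} {b : BF P} {f : F P E} :
      Syn k Tn p f → Syn k Tn p (.or b f)
  | box {p : k.X × F P E} {e : E} {f : F P E} : Syn k Tn p (.box e f)
  | dia {x x' : k.X} {g g' : F P E} {e : E} {f : F P E} :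
      Syn k Tn (x', g') f → Tn (x, g) e (x', g') → PartF k.L x' f g' →
      Syn k Tn (x, g) (.dia e f)
  | inv {p : k.X × F P E} {f : F P E} :
      Syn k Tn p f → Syn k Tn p (.inv f)
  | reach {x x' : k.X} {g g' : F P E} {b : BF P} :
      Relation.ReflTransGen (fun a c => ∃ e, Tn a e c) (x, g) (x', g') →
      BSat (k.L x') b → Syn k Tn (x, g) (.reach b)
  | dlf {p p' : k.X × F P E} {e : E} :
      Tn p e p' → Syn k Tn p .dlf

/-- The n-th iterate of the synthesis construction. -/
def StepN (k : KLTS P E) (U : Set E) :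
    ℕ → (k.X × F P E → E → k.X × F P E → Prop)
  | 0 => Step0 k
  | n + 1 => fun p e p' =>
      StepN k U n p e p' ∧ (e ∈ U ∨ Syn k (StepN k U n) p p.2)

/-- The synthesized system model S^n_{k,f}. -/
def Synth (k : KLTS P E) (U : Set E) (f : F P E) (n : ℕ) : KLTS P E :=
  ⟨k.X × F P E, fun p => k.L p.1, StepN k U n, (k.init, f)⟩

/-- Completeness: synthesizability holds at every reachable state-formula pair. -/
def Complete (k : KLTS P E) (U : Set E) (n : ℕ) (f : F P E) : Prop :=
  ∀ p' : k.X × F P E,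
    Relation.ReflTransGen (fun a c => ∃ e, StepN k U n a e c) (k.init, f) p' →
    Syn k (StepN k U n) p' p'.2

/-! Relate a state `y'` of the simulant to a pair `(y, g)` when `R y' y` and `g` holds at `y'`.
Every step of `y'` is matched by a `→₀` step of `(y, g)` to a related pair, and for a diamond part
`⟨e⟩h` of `g` the reduct can be chosen to keep `h` as a part. Hence, by induction on formulas, `g`
is synthesizable at `(y, g)` relative to any relation containing these matching steps. Since
synthesizability at level `n` is what lets a `→₀` step survive into level `n + 1`, induction on `n`
shows that the matching steps are present at every level. -/

theorem PartF.trans {X : Type} {L : X → Set P} {x : X} {a b c : F P E}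
    (hab : PartF L x a b) (hbc : PartF L x b c) : PartF L x a c := by
  induction hbc with
  | refl => exact hab
  | andL _ ih => exact .andL (ih hab)
  | andR _ ih => exact .andR (ih hab)
  | or hb _ ih => exact .or hb (ih hab)
  | inv _ ih => exact .inv (ih hab)

theorem SubF.partF {X : Type} {L : X → Set P} {x : X} {a b : F P E}
    (h : SubF a b) : PartF L x a b := by
  induction h with
  | refl => exact .refl _
  | andL _ ih => exact .andL ih
  | andR _ ih => exact .andR ih
  | inv _ ih => exact .inv ih

def KLTS.Sat (k : KLTS P E) (y : k.X) (g : F P E) : Prop :=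
  FSat ⟨k.X, k.L, k.T, y⟩ g

theorem KLTS.Sat.inv_of_step {k : KLTS P E} {y z : k.X} {e : E} {f : F P E}
    (hf : k.Sat y (.inv f)) (hyz : k.T y e z) : k.Sat z (.inv f) :=
  fun x hzx => hf x (.head ⟨e, hyz⟩ hzx)

section Matching

variable {k' k : KLTS P E}

theorem exists_step0_sat {y' z' : k'.X} {y z : k.X} {e : E} (hL : k'.L y' = k.L y)
    (hy'z' : k'.T y' e z') (hyz : k.T y e z) :
    ∀ g : F P E, k'.Sat y' g → ∃ g', Step0 k (y, g) e (z, g') ∧ k'.Sat z' g'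
  | .base _, _ => ⟨.base .tt, .base hyz, trivial⟩
  | .and f g, ⟨hf, hg⟩ => by
    obtain ⟨f', hff', hf'⟩ := exists_step0_sat hL hy'z' hyz f hf
    obtain ⟨g', hgg', hg'⟩ := exists_step0_sat hL hy'z' hyz g hg
    by_cases hsub : SubF g' f'
    · exact ⟨f', .and_sub hff' hgg' hsub, hf'⟩
    · exact ⟨.and f' g', .and_nsub hff' hgg' hsub, hf', hg'⟩
  | .or b f, hbf => by
    by_cases hb : BSat (k.L y) b
    · exact ⟨.base .tt, .or_true hyz hb, trivial⟩
    · obtain ⟨f', hff', hf'⟩ := exists_step0_sat hL hy'z' hyz f (hbf.resolve_left (hL ▸ hb))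
      exact ⟨f', .or_step hff', hf'⟩
  | .box e' f, hf => by
    by_cases he : e = e'
    · subst he
      exact ⟨f, .box_same hyz, hf z' hy'z'⟩
    · exact ⟨.base .tt, .box_other hyz he, trivial⟩
  | .dia _ _, _ => ⟨.base .tt, .dia_other hyz, trivial⟩
  | .inv f, hf => by
    obtain ⟨f', hff', hf'⟩ := exists_step0_sat hL hy'z' hyz f (hf y' .refl)
    by_cases hsub : SubF f' (.inv f)
    · exact ⟨.inv f, .inv_sub hff' hsub, hf.inv_of_step hy'z'⟩
    · exact ⟨.and (.inv f) f', .inv_nsub hff' hsub, hf.inv_of_step hy'z', hf'⟩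
  | .reach _, _ => ⟨.base .tt, .reach_true hyz, trivial⟩
  | .dlf, _ => ⟨.base .tt, .dlf hyz, trivial⟩

theorem exists_step0_sat_partF {y' z' : k'.X} {y z : k.X} {e : E} (hL : k'.L y' = k.L y)
    (hy'z' : k'.T y' e z') (hyz : k.T y e z) {g h : F P E}
    (hpart : PartF k.L y (.dia e h) g) (hg : k'.Sat y' g) (hh : k'.Sat z' h) :
    ∃ g', Step0 k (y, g) e (z, g') ∧ k'.Sat z' g' ∧ PartF k.L z h g' := by
  generalize hd : F.dia e h = d at hpart
  induction hpart with
  | refl =>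
    subst hd
    exact ⟨h, .dia_same hyz, hh, .refl h⟩
  | andL _ ih =>
    obtain ⟨hg₁, hg₂⟩ := hg
    obtain ⟨g₁', hs₁, hg₁', hpart₁⟩ := ih hg₁ hd
    obtain ⟨g₂', hs₂, hg₂'⟩ := exists_step0_sat hL hy'z' hyz _ hg₂
    by_cases hsub : SubF g₂' g₁'
    · exact ⟨g₁', .and_sub hs₁ hs₂ hsub, hg₁', hpart₁⟩
    · exact ⟨.and g₁' g₂', .and_nsub hs₁ hs₂ hsub, ⟨hg₁', hg₂'⟩, .andL hpart₁⟩
  | andR _ ih =>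
    obtain ⟨hg₁, hg₂⟩ := hg
    obtain ⟨g₂', hs₂, hg₂', hpart₂⟩ := ih hg₂ hd
    obtain ⟨g₁', hs₁, hg₁'⟩ := exists_step0_sat hL hy'z' hyz _ hg₁
    by_cases hsub : SubF g₂' g₁'
    · exact ⟨g₁', .and_sub hs₁ hs₂ hsub, hg₁', hpart₂.trans hsub.partF⟩
    · exact ⟨.and g₁' g₂', .and_nsub hs₁ hs₂ hsub, ⟨hg₁', hg₂'⟩, .andR hpart₂⟩
  | or hb _ ih =>
    obtain ⟨g', hs, hg', hpart'⟩ := ih (hg.resolve_left (hL ▸ hb)) hd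
    exact ⟨g', .or_step hs, hg', hpart'⟩
  | @inv _ f _ ih =>
    obtain ⟨g', hs, hg', hpart'⟩ := ih (hg y' .refl) hd
    by_cases hsub : SubF g' (.inv f)
    · exact ⟨.inv f, .inv_sub hs hsub, hg.inv_of_step hy'z', hpart'.trans hsub.partF⟩
    · exact ⟨.and (.inv f) g', .inv_nsub hs hsub, ⟨hg.inv_of_step hy'z', hg'⟩, .andR hpart'⟩

variable (R : k'.X → k.X → Prop) (Tn : k.X × F P E → E → k.X × F P E → Prop)

def StepMatching : Prop :=
  ∀ ⦃y' y g e z'⦄, R y' y → k'.Sat y' g → k'.T y' e z' →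
    ∃ z g', Tn (y, g) e (z, g') ∧ R z' z ∧ k'.Sat z' g'

def DiaMatching : Prop :=
  ∀ ⦃y' y g e z' h⦄, R y' y → k'.Sat y' g → k'.T y' e z' →
    PartF k.L y (.dia e h) g → k'.Sat z' h →
    ∃ z g', Tn (y, g) e (z, g') ∧ R z' z ∧ k'.Sat z' g' ∧ PartF k.L z h g'

variable {R Tn} {Tn' : k.X × F P E → E → k.X × F P E → Prop}

theorem SimRel.stepMatching_step0 (hR : SimRel k' k R) : StepMatching R (Step0 k) := by
  intro y' y g e z' hy hg hy'z'
  obtain ⟨z, hyz, hz⟩ := (hR y' y hy).2 e z' hy'z'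
  obtain ⟨g', hs, hg'⟩ := exists_step0_sat (hR y' y hy).1 hy'z' hyz g hg
  exact ⟨z, g', hs, hz, hg'⟩

theorem SimRel.diaMatching_step0 (hR : SimRel k' k R) : DiaMatching R (Step0 k) := by
  intro y' y g e z' h hy hg hy'z' hpart hh
  obtain ⟨z, hyz, hz⟩ := (hR y' y hy).2 e z' hy'z'
  obtain ⟨g', hs, hg', hpart'⟩ := exists_step0_sat_partF (hR y' y hy).1 hy'z' hyz hpart hg hh
  exact ⟨z, g', hs, hz, hg', hpart'⟩

theorem StepMatching.mono (h : StepMatching R Tn)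
    (hT : ∀ ⦃y' y g e q⦄, R y' y → k'.Sat y' g → Tn (y, g) e q → Tn' (y, g) e q) :
    StepMatching R Tn' := by
  intro y' y g e z' hy hg hy'z'
  obtain ⟨z, g', hs, hz, hg'⟩ := h hy hg hy'z'
  exact ⟨z, g', hT hy hg hs, hz, hg'⟩

theorem DiaMatching.mono (h : DiaMatching R Tn)
    (hT : ∀ ⦃y' y g e q⦄, R y' y → k'.Sat y' g → Tn (y, g) e q → Tn' (y, g) e q) :
    DiaMatching R Tn' := by
  intro y' y g e z' h' hy hg hy'z' hpart hh
  obtain ⟨z, g', hs, hz, hg', hpart'⟩ := h hy hg hy'z' hpart hh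
  exact ⟨z, g', hT hy hg hs, hz, hg', hpart'⟩

theorem StepMatching.exists_reflTransGen (hm : StepMatching R Tn) {a' b' : k'.X}
    (hab : k'.Star a' b') {a : k.X} {g : F P E} (ha : R a' a) (hg : k'.Sat a' g) :
    ∃ b g', Relation.ReflTransGen (fun p q => ∃ e, Tn p e q) (a, g) (b, g') ∧ R b' b := by
  induction hab using Relation.ReflTransGen.head_induction_on generalizing a g with
  | refl => exact ⟨a, g, .refl, ha⟩
  | head hstep _ ih =>
    obtain ⟨e, hstep⟩ := hstep
    obtain ⟨z, g', hs, hz, hg'⟩ := hm ha hg hstep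
    obtain ⟨b, g'', hpath, hb⟩ := ih hz hg'
    exact ⟨b, g'', .head ⟨e, hs⟩ hpath, hb⟩

/-- The diamond case recurses into the reduct, which is why parts of `g`, not just `g`, are
tracked. -/
theorem SimRel.syn_of_sat (hR : SimRel k' k R) (hm : StepMatching R Tn)
    (hmd : DiaMatching R Tn) (f : F P E) {y' : k'.X} {y : k.X} {g : F P E} (hy : R y' y)
    (hg : k'.Sat y' g) (hf : k'.Sat y' f) (hpart : PartF k.L y f g) : Syn k Tn (y, g) f := by
  induction f generalizing y' y g with
  | base b => exact .base ((hR y' y hy).1 ▸ hf)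
  | and f₁ f₂ ih₁ ih₂ =>
    exact .and (ih₁ hy hg hf.1 ((PartF.refl f₁).andL.trans hpart))
      (ih₂ hy hg hf.2 ((PartF.refl f₂).andR.trans hpart))
  | or b f ih =>
    by_cases hb : BSat (k.L y) b
    · exact .orl hb
    · exact .orr (ih hy hg (hf.resolve_left ((hR y' y hy).1 ▸ hb))
        ((PartF.or hb (.refl f)).trans hpart))
  | box => exact .box
  | dia e h ih =>
    obtain ⟨z', hy'z', hh⟩ := hf
    obtain ⟨z, g', hs, hz, hg', hpart'⟩ := hmd hy hg hy'z' hpart hh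
    exact .dia (ih hz hg' hh hpart') hs hpart'
  | inv f ih => exact .inv (ih hy hg (hf y' .refl) ((PartF.refl f).inv.trans hpart))
  | reach b =>
    obtain ⟨x', hy'x', hb⟩ := hf
    obtain ⟨x, g', hpath, hx⟩ := hm.exists_reflTransGen hy'x' hy hg
    exact .reach hpath ((hR x' x hx).1 ▸ hb)
  | dlf =>
    obtain ⟨e, z', hy'z'⟩ := hf
    obtain ⟨z, g', hs, -⟩ := hm hy hg hy'z'
    exact .dlf hs

theorem SimRel.stepN_of_step0 (hR : SimRel k' k R) (U : Set E) (n : ℕ) {y' : k'.X} {y : k.X}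
    {g : F P E} {e : E} {q : k.X × F P E} (hy : R y' y) (hg : k'.Sat y' g)
    (hs : Step0 k (y, g) e q) : StepN k U n (y, g) e q := by
  induction n generalizing y' y g e q with
  | zero => exact hs
  | succ n ih =>
    have hT : ∀ ⦃y' y g e q⦄, R y' y → k'.Sat y' g →
        Step0 k (y, g) e q → StepN k U n (y, g) e q := fun _ _ _ _ _ => ih
    exact ⟨ih hy hg hs, .inr (hR.syn_of_sat (hR.stepMatching_step0.mono hT)
      (hR.diaMatching_step0.mono hT) g hy hg hg (.refl g))⟩

end Matching

/-- Maximal permissiveness of synthesis (Theorem max). -/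
theorem synthesis_maximal {P E : Type} (k' k : KLTS P E) (U : Set E)
    (f : F P E) (hsim : Sim k' k) (hv : FSat k' f) :
    ∀ n : ℕ, Sim k' (Synth k U f n) := by
  intro n
  obtain ⟨R, hinit, hR⟩ := hsim
  refine ⟨fun y' p => R y' p.1 ∧ k'.Sat y' p.2, ⟨hinit, hv⟩, ?_⟩
  rintro y' ⟨y, g⟩ ⟨hy, hg⟩
  refine ⟨(hR y' y hy).1, fun e z' hy'z' => ?_⟩
  obtain ⟨z, g', hs, hz, hg'⟩ := hR.stepMatching_step0 hy hg hy'z'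
  exact ⟨(z, g'), hR.stepN_of_step0 U n hy hg hs, hz, hg'⟩
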